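/- Define φ : ℝ² → ℝ³ by φ(x) := ( θ[1,0](x) − θ[0,0](x), θ[0,1](x) − θ[0,0](x), θ[1,1](x) − θ[0,0](x) ). Set θ₁₀ := ¼[u,u], θ₀₁ := ¼[v,v], θ₁₁ := ¼[w,w], and τ₀ := (θ₁₀, θ₀₁, θ₁₁), τ₁ := (−θ₁₀, θ₁₁−θ₁₀, θ₀₁−θ₁₀), τ₂ := (θ₁₁−θ₀₁, −θ₀₁, θ₁₀−θ₀₁), τ₃ := (θ₀₁−θ₁₁, θ₁₀−θ₁₁, −θ₁₁). Let 𝒫 := { T = (T₁,T₂,T₃) ∈ ℝ³ : |T₁+T₂−T₃| ≤ θ₁₀+θ₀₁−θ₁₁, |T₁−T₂+T₃| ≤ θ₁₀−θ₀₁+θ₁₁, |T₁−T₂−T₃| ≤ −θ₁₀+θ₀₁+θ₁₁ } (note θ₁₀+θ₀₁−θ₁₁ = −½[u,v] > 0, θ₁₀−θ₀₁+θ₁₁ = −½[u,w] > 0, −θ₁₀+θ₀₁+θ₁₁ = −½[v,w] > 0, so 𝒫 is a nondegenerate parallelepiped). Then: (1) 𝒫 equals the convex hull of the eight points ±τ₀,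 ±τ₁, ±τ₂, ±τ₃, and these eight points are exactly the extreme points (vertices) of 𝒫; (2) the image φ(ℝ²) (the tropical Kummer quartic surface) equals the topological boundary of 𝒫. -/

import Mathlib

/-!
STATEMENT 9: With `φ = (θ[1,0] − θ[0,0], θ[0,1] − θ[0,0], θ[1,1] − θ[0,0])`,
`θ₁₀ = ¼[u,u]`, `θ₀₁ = ¼[v,v]`, `θ₁₁ = ¼[w,w]`, and the parallelepiped
`Ppar = {T : |T₁+T₂−T₃| ≤ θ₁₀+θ₀₁−θ₁₁, |T₁−T₂+T₃| ≤ θ₁₀−θ₀₁+θ₁₁, |T₁−T₂−T₃| ≤ −θ₁₀+θ₀₁+θ₁₁}`: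
(1) `Ppar` is the convex hull of `±τ₀, ±τ₁, ±τ₂, ±τ₃` and these eight points are exactly its
extreme points; (2) the image `φ(ℝ²)` (the tropical Kummer quartic surface) equals the
topological boundary of `Ppar`.
-/

noncomputable section

/-- The standard inner product on `ℝ × ℝ`. -/
def ip (x y : ℝ × ℝ) : ℝ := x.1 * y.1 + x.2 * y.2

/-- The lattice `ℤu + ℤv` as a subset of `ℝ × ℝ`. -/
def lat (u v : ℝ × ℝ) : Set (ℝ × ℝ) :=
  {p | ∃ m n : ℤ, p = (m : ℝ) • u + (n : ℝ) • v}

/-- The second-order tropical theta function `θ[j₁,j₂]` of the lattice `ℤu + ℤv`. -/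
def theta (u v : ℝ × ℝ) (j₁ j₂ : ℝ) (x : ℝ × ℝ) : ℝ :=
  sInf {t : ℝ | ∃ p ∈ lat u v,
      t = ip (x + p + (j₁ / 2) • u + (j₂ / 2) • v) (x + p + (j₁ / 2) • u + (j₂ / 2) • v)}
    - ip x x

/-- The map `φ = (θ[1,0] − θ[0,0], θ[0,1] − θ[0,0], θ[1,1] − θ[0,0]) : ℝ² → ℝ³`. -/
def phiMap (u v : ℝ × ℝ) (x : ℝ × ℝ) : ℝ × ℝ × ℝ :=
  (theta u v 1 0 x - theta u v 0 0 x,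
   theta u v 0 1 x - theta u v 0 0 x,
   theta u v 1 1 x - theta u v 0 0 x)


/-!
In Gram coordinates `(⟪y,u⟫, ⟪y,v⟫)` the Voronoi cell `V` of `𝖯` is a hexagon, and
`|y|² ≤ |y + p|²` for `y ∈ V`, `p ∈ 𝖯` reduces to the nonnegativity on `ℤ²` of the Selling form
`a₃ (m - n)² + a₂ m² + a₁ n²` (with `a₁ = -⟪v,w⟫, a₂ = -⟪u,w⟫, a₃ = -⟪u,v⟫`) plus a linear term.
So on `V` we get `θ[0,0] = 0`, and for a half period `h` one of four explicit points `x + h + p`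
lies in `V` again, whence `θ[h](x)` is the least of four affine functions of the Gram coordinates
of `x`. This makes `φ` on `V` an explicit piecewise affine map `kummer` of the hexagon; as `φ` is
`𝖯`-periodic and every point has a translate in `V`, `φ(ℝ²)` is the image of the hexagon. The
hexagon splits into twelve pieces, swapped in pairs by `x ↦ -x` (under which `φ` is even), and
`kummer` maps each piece affinely onto one of the six faces of `𝒫`. In the coordinates
`(T₁+T₂−T₃, T₁−T₂+T₃, T₁−T₂−T₃)` the parallelepiped `𝒫` is a box, which gives part (1).
-/

namespace TropicalKummer

open Set

section InnerProduct

lemma ip_comm (x y : ℝ × ℝ) : ip x y = ip y x := by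
  simp only [ip]; ring

lemma ip_add_left (x y z : ℝ × ℝ) : ip (x + y) z = ip x z + ip y z := by
  simp only [ip, Prod.fst_add, Prod.snd_add]; ring

lemma ip_add_right (x y z : ℝ × ℝ) : ip x (y + z) = ip x y + ip x z := by
  simp only [ip, Prod.fst_add, Prod.snd_add]; ring

lemma ip_neg_left (x y : ℝ × ℝ) : ip (-x) y = -ip x y := by
  simp only [ip, Prod.fst_neg, Prod.snd_neg]; ring

lemma ip_neg_right (x y : ℝ × ℝ) : ip x (-y) = -ip x y := by
  simp only [ip, Prod.fst_neg, Prod.snd_neg]; ring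

lemma ip_sub_left (x y z : ℝ × ℝ) : ip (x - y) z = ip x z - ip y z := by
  simp only [ip, Prod.fst_sub, Prod.snd_sub]; ring

lemma ip_sub_right (x y z : ℝ × ℝ) : ip x (y - z) = ip x y - ip x z := by
  simp only [ip, Prod.fst_sub, Prod.snd_sub]; ring

lemma ip_smul_left (r : ℝ) (x y : ℝ × ℝ) : ip (r • x) y = r * ip x y := by
  simp only [ip, Prod.smul_fst, Prod.smul_snd, smul_eq_mul]; ring

lemma ip_smul_right (r : ℝ) (x y : ℝ × ℝ) : ip x (r • y) = r * ip x y := by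
  simp only [ip, Prod.smul_fst, Prod.smul_snd, smul_eq_mul]; ring

lemma ip_zero_left (x : ℝ × ℝ) : ip 0 x = 0 := by
  simp only [ip, Prod.fst_zero, Prod.snd_zero]; ring

lemma ip_zero_right (x : ℝ × ℝ) : ip x 0 = 0 := by
  simp only [ip, Prod.fst_zero, Prod.snd_zero]; ring

lemma ip_self_nonneg (x : ℝ × ℝ) : 0 ≤ ip x x :=
  add_nonneg (mul_self_nonneg _) (mul_self_nonneg _)

lemma half_ip_sub_le (a b : ℝ × ℝ) : ip b b / 2 - ip a a ≤ ip (a + b) (a + b) := by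
  have := ip_self_nonneg ((2 : ℝ) • a + b)
  simp only [ip_add_left, ip_add_right, ip_smul_left, ip_smul_right, ip_comm b a] at this ⊢
  linarith

end InnerProduct

section Lattice

variable {u v p q : ℝ × ℝ}

lemma zero_mem_lat : (0 : ℝ × ℝ) ∈ lat u v := ⟨0, 0, by simp⟩

lemma left_mem_lat : u ∈ lat u v := ⟨1, 0, by simp⟩

lemma right_mem_lat : v ∈ lat u v := ⟨0, 1, by simp⟩

lemma add_mem_lat (hp : p ∈ lat u v) (hq : q ∈ lat u v) : p + q ∈ lat u v := by
  obtain ⟨m, n, rfl⟩ := hp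
  obtain ⟨m', n', rfl⟩ := hq
  exact ⟨m + m', n + n', by push_cast; module⟩

lemma neg_mem_lat (hp : p ∈ lat u v) : -p ∈ lat u v := by
  obtain ⟨m, n, rfl⟩ := hp
  exact ⟨-m, -n, by push_cast; module⟩

lemma sub_mem_lat (hp : p ∈ lat u v) (hq : q ∈ lat u v) : p - q ∈ lat u v := by
  simpa only [sub_eq_add_neg] using add_mem_lat hp (neg_mem_lat hq)

lemma lat_comm (u v : ℝ × ℝ) : lat v u = lat u v := by
  ext p
  constructor <;> rintro ⟨m, n, rfl⟩ <;> exact ⟨n, m, add_comm _ _⟩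

end Lattice

def latticeSqDist (u v y : ℝ × ℝ) : ℝ :=
  sInf {t | ∃ p ∈ lat u v, t = ip (y + p) (y + p)}

lemma theta_eq_latticeSqDist (u v : ℝ × ℝ) (j₁ j₂ : ℝ) (x : ℝ × ℝ) :
    theta u v j₁ j₂ x = latticeSqDist u v (x + (j₁ / 2) • u + (j₂ / 2) • v) - ip x x := by
  have h (p : ℝ × ℝ) :
      x + p + (j₁ / 2) • u + (j₂ / 2) • v = x + (j₁ / 2) • u + (j₂ / 2) • v + p := by
    abel
  simp only [theta, latticeSqDist, h]

lemma latticeSqDist_comm (u v y : ℝ × ℝ) : latticeSqDist v u y = latticeSqDist u v y := by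
  simp only [latticeSqDist, lat_comm]

lemma latticeSqDist_eq_of_isLeast {u v y p₀ : ℝ × ℝ} (hp₀ : p₀ ∈ lat u v)
    (h : ∀ p ∈ lat u v, ip (y + p₀) (y + p₀) ≤ ip (y + p) (y + p)) :
    latticeSqDist u v y = ip (y + p₀) (y + p₀) :=
  IsLeast.csInf_eq ⟨⟨p₀, hp₀, rfl⟩, by rintro t ⟨p, hp, rfl⟩; exact h p hp⟩

lemma latticeSqDist_add {u v y p : ℝ × ℝ} (hp : p ∈ lat u v) :
    latticeSqDist u v (y + p) = latticeSqDist u v y := by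
  unfold latticeSqDist
  congr 1
  ext t
  constructor
  · rintro ⟨q, hq, rfl⟩
    exact ⟨p + q, add_mem_lat hp hq, by rw [add_assoc]⟩
  · rintro ⟨q, hq, rfl⟩
    exact ⟨q - p, sub_mem_lat hq hp, by rw [add_add_sub_cancel]⟩

lemma phiMap_add {u v x p : ℝ × ℝ} (hp : p ∈ lat u v) : phiMap u v (x + p) = phiMap u v x := by
  have h (j₁ j₂ : ℝ) : latticeSqDist u v (x + p + (j₁ / 2) • u + (j₂ / 2) • v) =
      latticeSqDist u v (x + (j₁ / 2) • u + (j₂ / 2) • v) := by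
    rw [show x + p + (j₁ / 2) • u + (j₂ / 2) • v = x + (j₁ / 2) • u + (j₂ / 2) • v + p by abel,
      latticeSqDist_add hp]
  simp only [phiMap, theta_eq_latticeSqDist, h, sub_sub_sub_cancel_right]

lemma exists_ip_eq {u v : ℝ × ℝ} (hd : u.1 * v.2 - u.2 * v.1 ≠ 0) (X Y : ℝ) :
    ∃ x, ip x u = X ∧ ip x v = Y := by
  have hu : ip (X * v.2 - Y * u.2, Y * u.1 - X * v.1) u = X * (u.1 * v.2 - u.2 * v.1) := by
    simp only [ip]; ring
  have hv : ip (X * v.2 - Y * u.2, Y * u.1 - X * v.1) v = Y * (u.1 * v.2 - u.2 * v.1) := by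
    simp only [ip]; ring
  exact ⟨(u.1 * v.2 - u.2 * v.1)⁻¹ • (X * v.2 - Y * u.2, Y * u.1 - X * v.1),
    by rw [ip_smul_left, hu]; field_simp, by rw [ip_smul_left, hv]; field_simp⟩

lemma two_mul_norm_sub_one_le (k : ℤ × ℤ) : 2 * ‖k‖ - 1 ≤ (k.1 : ℝ) ^ 2 + (k.2 : ℝ) ^ 2 := by
  rw [Prod.norm_def, Int.norm_eq_abs, Int.norm_eq_abs]
  rcases max_choice |(k.1 : ℝ)| |(k.2 : ℝ)| with h | h <;> rw [h]
  · nlinarith [sq_abs (k.1 : ℝ), sq_nonneg (|(k.1 : ℝ)| - 1), sq_nonneg (k.2 : ℝ)]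
  · nlinarith [sq_abs (k.2 : ℝ), sq_nonneg (|(k.2 : ℝ)| - 1), sq_nonneg (k.1 : ℝ)]

section Hexagon

/-- The Voronoi cell in Gram coordinates `(⟪y, u⟫, ⟪y, v⟫)`, written with the Selling parameters
`a₁ = -⟪v, w⟫`, `a₂ = -⟪u, w⟫`, `a₃ = -⟪u, v⟫` of the superbasis. -/
def hexagon (a₁ a₂ a₃ : ℝ) : Set (ℝ × ℝ) :=
  {q | |2 * q.1| ≤ a₂ + a₃ ∧ |2 * q.2| ≤ a₁ + a₃ ∧ |2 * (q.1 + q.2)| ≤ a₁ + a₂}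

lemma mem_hexagon_iff {a₁ a₂ a₃ : ℝ} {q : ℝ × ℝ} :
    q ∈ hexagon a₁ a₂ a₃ ↔ -(a₂ + a₃) ≤ 2 * q.1 ∧ 2 * q.1 ≤ a₂ + a₃ ∧
      -(a₁ + a₃) ≤ 2 * q.2 ∧ 2 * q.2 ≤ a₁ + a₃ ∧
      -(a₁ + a₂) ≤ 2 * (q.1 + q.2) ∧ 2 * (q.1 + q.2) ≤ a₁ + a₂ := by
  simp only [hexagon, mem_ofPred_eq, abs_le, and_assoc]

lemma neg_mem_hexagon {a₁ a₂ a₃ : ℝ} {q : ℝ × ℝ} (hq : q ∈ hexagon a₁ a₂ a₃) :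
    -q ∈ hexagon a₁ a₂ a₃ := by
  simpa only [hexagon, mem_ofPred_eq, Prod.fst_neg, Prod.snd_neg, mul_neg, ← neg_add, abs_neg]
    using hq

lemma int_mul_sub_one_nonneg (k : ℤ) : 0 ≤ (k : ℝ) * (k - 1) := by
  have : 0 ≤ k * (k - 1) := by
    rcases le_or_gt k 0 with h | h
    · exact mul_nonneg_of_nonpos_of_nonpos h (by omega)
    · exact mul_nonneg (by omega) (by omega)
  exact_mod_cast this

/-- Split by the order of `0, m, n`: then `2 (m q.1 + n q.2)` is bounded below through two of the
three hexagon constraints, and what is left is a sum of terms `aᵢ k (k - 1) ≥ 0`, `k ∈ ℤ`. -/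
lemma selling_form_add_nonneg {a₁ a₂ a₃ : ℝ} (h₁ : 0 ≤ a₁) (h₂ : 0 ≤ a₂) (h₃ : 0 ≤ a₃)
    {q : ℝ × ℝ} (hq : q ∈ hexagon a₁ a₂ a₃) (m n : ℤ) :
    0 ≤ a₃ * (m - n) ^ 2 + a₂ * m ^ 2 + a₁ * n ^ 2 + 2 * (m * q.1 + n * q.2) := by
  obtain ⟨hP₁, hP₂, hR₁, hR₂, hPR₁, hPR₂⟩ := mem_hexagon_iff.1 hq
  have e₁ := mul_nonneg h₁ (int_mul_sub_one_nonneg n)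
  have e₁' := mul_nonneg h₁ (int_mul_sub_one_nonneg (-n))
  have e₂ := mul_nonneg h₂ (int_mul_sub_one_nonneg m)
  have e₂' := mul_nonneg h₂ (int_mul_sub_one_nonneg (-m))
  have e₃ := mul_nonneg h₃ (int_mul_sub_one_nonneg (m - n))
  have e₃' := mul_nonneg h₃ (int_mul_sub_one_nonneg (n - m))
  push_cast at e₁ e₁' e₂ e₂' e₃ e₃'
  rcases le_total 0 (m : ℝ) with hm | hm <;> rcases le_total 0 (n : ℝ) with hn | hn <;>
    rcases le_total (n : ℝ) m with hmn | hmn <;>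
  linarith [mul_nonneg (sub_nonneg.2 hmn) (sub_nonneg.2 hP₁),
    mul_nonneg (sub_nonneg.2 hmn) (sub_nonneg.2 hP₂),
    mul_nonneg (sub_nonneg.2 hmn) (sub_nonneg.2 hR₁),
    mul_nonneg (sub_nonneg.2 hmn) (sub_nonneg.2 hR₂),
    mul_nonneg (sub_nonneg.2 hm) (sub_nonneg.2 hP₁),
    mul_nonneg (sub_nonneg.2 hm) (sub_nonneg.2 hP₂),
    mul_nonneg (sub_nonneg.2 hn) (sub_nonneg.2 hR₁),
    mul_nonneg (sub_nonneg.2 hn) (sub_nonneg.2 hR₂),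
    mul_nonneg (sub_nonneg.2 hm) (sub_nonneg.2 hPR₁),
    mul_nonneg (sub_nonneg.2 hm) (sub_nonneg.2 hPR₂),
    mul_nonneg (sub_nonneg.2 hn) (sub_nonneg.2 hPR₁),
    mul_nonneg (sub_nonneg.2 hn) (sub_nonneg.2 hPR₂)]

end Hexagon

def voronoiCell (u v w : ℝ × ℝ) : Set (ℝ × ℝ) :=
  {y | |2 * ip y u| ≤ ip u u ∧ |2 * ip y v| ≤ ip v v ∧ |2 * ip y w| ≤ ip w w}

lemma voronoiCell_swap_uv (u v w : ℝ × ℝ) : voronoiCell v u w = voronoiCell u v w := by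
  ext y
  simp only [voronoiCell, mem_ofPred_eq]
  tauto

lemma voronoiCell_swap_uw (u v w : ℝ × ℝ) : voronoiCell w v u = voronoiCell u v w := by
  ext y
  simp only [voronoiCell, mem_ofPred_eq]
  tauto

def kummerMin (a X Y Z : ℝ) : ℝ := min (-|X|) (a - |Y - Z|)

/-- The map `φ` on the Voronoi cell, in Gram coordinates `q = (⟪x, u⟫, ⟪x, v⟫)` and Selling
parameters `a₁, a₂, a₃` (so `⟪x, w⟫ = -q.1 - q.2`). -/
def kummer (a₁ a₂ a₃ : ℝ) (q : ℝ × ℝ) : ℝ × ℝ × ℝ :=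
  ((a₂ + a₃) / 4 + kummerMin a₁ q.1 q.2 (-q.1 - q.2),
   (a₁ + a₃) / 4 + kummerMin a₂ q.2 q.1 (-q.1 - q.2),
   (a₁ + a₂) / 4 + kummerMin a₃ (-q.1 - q.2) q.2 q.1)

lemma eq_add_kummerMin {t b a X Y Z : ℝ} (h₀ : t ≤ b + X) (h₁ : t ≤ b - X)
    (h₂ : t ≤ b + a + (Y - Z)) (h₃ : t ≤ b + a - (Y - Z))
    (ht : t = b + X ∨ t = b - X ∨ t = b + a + (Y - Z) ∨ t = b + a - (Y - Z)) :
    t = b + kummerMin a X Y Z := by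
  unfold kummerMin
  have hX : t - b ≤ -|X| := by rcases abs_cases X with ⟨h, -⟩ | ⟨h, -⟩ <;> linarith
  have hD : t - b ≤ a - |Y - Z| := by rcases abs_cases (Y - Z) with ⟨h, -⟩ | ⟨h, -⟩ <;> linarith
  have := min_le_left (-|X|) (a - |Y - Z|)
  have := min_le_right (-|X|) (a - |Y - Z|)
  have := neg_abs_le X
  have := le_abs_self X
  have := neg_abs_le (Y - Z)
  have := le_abs_self (Y - Z)
  refine le_antisymm (by linarith [le_min hX hD]) ?_
  rcases ht with h | h | h | h <;> linarith

structure IsObtuseSuperbasis (u v w : ℝ × ℝ) : Prop where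
  add_add_eq_zero : u + v + w = 0
  ip_uv_neg : ip u v < 0
  ip_uw_neg : ip u w < 0
  ip_vw_neg : ip v w < 0

namespace IsObtuseSuperbasis

variable {u v w : ℝ × ℝ} (hS : IsObtuseSuperbasis u v w)
include hS

lemma eq_neg_sub : w = -u - v := by
  rw [← sub_eq_zero, ← hS.add_add_eq_zero]; abel

lemma swap_uv : IsObtuseSuperbasis v u w :=
  ⟨by rw [add_comm v u]; exact hS.add_add_eq_zero, by rw [ip_comm]; exact hS.ip_uv_neg,
    hS.ip_vw_neg, hS.ip_uw_neg⟩

lemma swap_uw : IsObtuseSuperbasis w v u :=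
  ⟨by rw [← hS.add_add_eq_zero]; abel, by rw [ip_comm]; exact hS.ip_vw_neg,
    by rw [ip_comm]; exact hS.ip_uw_neg, by rw [ip_comm]; exact hS.ip_uv_neg⟩

lemma ip_right_eq (x : ℝ × ℝ) : ip x w = -ip x u - ip x v := by
  rw [hS.eq_neg_sub, ip_sub_right, ip_neg_right]

lemma ip_self_left : ip u u = -ip u v - ip u w := by
  rw [hS.ip_right_eq]; ring

lemma ip_self_middle : ip v v = -ip u v - ip v w := by
  rw [hS.ip_right_eq, ip_comm v u]; ring

lemma ip_self_right : ip w w = -ip u w - ip v w := by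
  rw [hS.ip_right_eq, ip_comm w u, ip_comm w v]

lemma third_mem_lat : w ∈ lat u v :=
  hS.eq_neg_sub ▸ sub_mem_lat (neg_mem_lat left_mem_lat) right_mem_lat

lemma lat_eq : lat w v = lat u v := by
  ext p
  constructor <;> rintro ⟨m, n, rfl⟩ <;>
    exact ⟨-m, n - m, by rw [hS.eq_neg_sub]; push_cast; module⟩

lemma latticeSqDist_swap_uw (y : ℝ × ℝ) : latticeSqDist w v y = latticeSqDist u v y := by
  simp only [latticeSqDist, hS.lat_eq]

lemma mem_voronoiCell_iff {y : ℝ × ℝ} :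
    y ∈ voronoiCell u v w ↔ (ip y u, ip y v) ∈ hexagon (-ip v w) (-ip u w) (-ip u v) := by
  simp only [voronoiCell, hexagon, mem_ofPred_eq, hS.ip_self_left, hS.ip_self_middle,
    hS.ip_self_right, hS.ip_right_eq y]
  rw [show 2 * (-ip y u - ip y v) = -(2 * (ip y u + ip y v)) by ring, abs_neg]
  constructor <;> rintro ⟨h₁, h₂, h₃⟩ <;> exact ⟨by linarith, by linarith, by linarith⟩

lemma ip_le_ip_add {y p : ℝ × ℝ} (hy : y ∈ voronoiCell u v w) (hp : p ∈ lat u v) :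
    ip y y ≤ ip (y + p) (y + p) := by
  obtain ⟨m, n, rfl⟩ := hp
  have key := selling_form_add_nonneg (neg_nonneg.2 hS.ip_vw_neg.le)
    (neg_nonneg.2 hS.ip_uw_neg.le) (neg_nonneg.2 hS.ip_uv_neg.le) (hS.mem_voronoiCell_iff.1 hy) m n
  have hu := hS.ip_self_left
  have hv := hS.ip_self_middle
  simp only [ip_add_left, ip_add_right, ip_smul_left, ip_smul_right, ip_comm v u, ip_comm u y,
    ip_comm v y] at key ⊢
  nlinarith [key]

lemma mem_voronoiCell_of_forall_ip_le {y : ℝ × ℝ}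
    (h : ∀ p ∈ lat u v, ip y y ≤ ip (y + p) (y + p)) : y ∈ voronoiCell u v w := by
  have key {r : ℝ × ℝ} (hr : r ∈ lat u v) : |2 * ip y r| ≤ ip r r := by
    have h₁ := h r hr
    have h₂ := h (-r) (neg_mem_lat hr)
    simp only [ip_add_left, ip_add_right, ip_neg_left, ip_neg_right, ip_comm r y] at h₁ h₂
    exact abs_le.2 ⟨by linarith, by linarith⟩
  exact ⟨key left_mem_lat, key right_mem_lat, key hS.third_mem_lat⟩

lemma latticeSqDist_eq {y z : ℝ × ℝ} (hz : z ∈ voronoiCell u v w) (hzy : z - y ∈ lat u v) :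
    latticeSqDist u v y = ip z z := by
  rw [latticeSqDist_eq_of_isLeast hzy, add_sub_cancel]
  intro p hp
  rw [add_sub_cancel]
  have := hS.ip_le_ip_add hz (sub_mem_lat hp hzy)
  rwa [show z + (p - (z - y)) = y + p by abel] at this

lemma min_mul_le_ip (m n : ℝ) :
    min (-ip v w) (-ip u w) * (m ^ 2 + n ^ 2) ≤ ip (m • u + n • v) (m • u + n • v) := by
  have hu := hS.ip_self_left
  have hv := hS.ip_self_middle
  simp only [ip_add_left, ip_add_right, ip_smul_left, ip_smul_right, ip_comm v u]
  nlinarith [mul_nonneg (neg_nonneg.2 hS.ip_uv_neg.le) (sq_nonneg (m - n)),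
    mul_nonneg (sub_nonneg.2 (min_le_left (-ip v w) (-ip u w))) (sq_nonneg n),
    mul_nonneg (sub_nonneg.2 (min_le_right (-ip v w) (-ip u w))) (sq_nonneg m)]

open Filter in
lemma exists_forall_ip_add_le (x : ℝ × ℝ) :
    ∃ p₀ ∈ lat u v, ∀ p ∈ lat u v, ip (x + p₀) (x + p₀) ≤ ip (x + p) (x + p) := by
  let f : ℤ × ℤ → ℝ := fun k =>
    ip (x + ((k.1 : ℝ) • u + (k.2 : ℝ) • v)) (x + ((k.1 : ℝ) • u + (k.2 : ℝ) • v))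
  set c := min (-ip v w) (-ip u w)
  have hc : 0 < c := lt_min (neg_pos.2 hS.ip_vw_neg) (neg_pos.2 hS.ip_uw_neg)
  have hf : Tendsto f (cocompact _) atTop := by
    refine tendsto_atTop_mono (fun k => ?_) (tendsto_atTop_add_const_right _ (-(c / 2 + ip x x))
      (tendsto_norm_cocompact_atTop.const_mul_atTop hc))
    have := half_ip_sub_le x ((k.1 : ℝ) • u + (k.2 : ℝ) • v)
    nlinarith [mul_le_mul_of_nonneg_left (two_mul_norm_sub_one_le k) hc.le,
      hS.min_mul_le_ip k.1 k.2]
  obtain ⟨k, hk⟩ := continuous_of_discreteTopology.exists_forall_le hf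
  refine ⟨_, ⟨k.1, k.2, rfl⟩, ?_⟩
  rintro _ ⟨m, n, rfl⟩
  exact hk (m, n)

lemma exists_add_mem_voronoiCell (x : ℝ × ℝ) : ∃ p ∈ lat u v, x + p ∈ voronoiCell u v w := by
  obtain ⟨p₀, hp₀, hmin⟩ := hS.exists_forall_ip_add_le x
  refine ⟨p₀, hp₀, hS.mem_voronoiCell_of_forall_ip_le fun p hp => ?_⟩
  rw [add_assoc]
  exact hmin _ (add_mem_lat hp₀ hp)

lemma exists_half_add_mem_voronoiCell {x : ℝ × ℝ} (hx : x ∈ voronoiCell u v w) :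
    ∃ p ∈ ({0, -u, v, -u - v} : Set (ℝ × ℝ)), x + (1 / 2 : ℝ) • u + p ∈ voronoiCell u v w := by
  simp only [hS.mem_voronoiCell_iff, mem_hexagon_iff, mem_insert_iff, mem_singleton_iff,
    exists_eq_or_imp, exists_eq_left, ip_add_left, ip_neg_left, ip_sub_left, ip_smul_left,
    ip_zero_left, ip_comm v u, add_zero] at hx ⊢
  obtain ⟨hX₁, hX₂, hY₁, hY₂, hZ₁, hZ₂⟩ := hx
  have hu := hS.ip_self_left
  have hv := hS.ip_self_middle
  have := hS.ip_uv_neg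
  have := hS.ip_uw_neg
  have := hS.ip_vw_neg
  rcases le_total (ip x u) 0 with hX | hX
  · by_cases hY : ip v w ≤ 2 * ip x v
    · by_cases hZ : ip v w ≤ -2 * (ip x u + ip x v)
      · refine Or.inl ⟨?_, ?_, ?_, ?_, ?_, ?_⟩ <;> linarith
      · refine Or.inr <| Or.inr <| Or.inr ⟨?_, ?_, ?_, ?_, ?_, ?_⟩ <;> linarith
    · refine Or.inr <| Or.inr <| Or.inl ⟨?_, ?_, ?_, ?_, ?_, ?_⟩ <;> linarith
  · by_cases hY : 2 * ip x v ≤ -ip v w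
    · by_cases hZ : -2 * (ip x u + ip x v) ≤ -ip v w
      · refine Or.inr <| Or.inl ⟨?_, ?_, ?_, ?_, ?_, ?_⟩ <;> linarith
      · refine Or.inr <| Or.inr <| Or.inl ⟨?_, ?_, ?_, ?_, ?_, ?_⟩ <;> linarith
    · refine Or.inr <| Or.inr <| Or.inr ⟨?_, ?_, ?_, ?_, ?_, ?_⟩ <;> linarith

lemma latticeSqDist_add_half {x : ℝ × ℝ} (hx : x ∈ voronoiCell u v w) :
    latticeSqDist u v (x + (1 / 2 : ℝ) • u) =
      ip x x + ip u u / 4 + kummerMin (-ip v w) (ip x u) (ip x v) (ip x w) := by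
  obtain ⟨p₀, hp₀, hz⟩ := hS.exists_half_add_mem_voronoiCell hx
  have hp₀lat : p₀ ∈ lat u v := by
    rcases hp₀ with rfl | rfl | rfl | rfl
    exacts [zero_mem_lat, neg_mem_lat left_mem_lat, right_mem_lat,
      sub_mem_lat (neg_mem_lat left_mem_lat) right_mem_lat]
  rw [hS.latticeSqDist_eq hz (by rwa [add_sub_cancel_left])]
  have hmin {p : ℝ × ℝ} (hp : p ∈ lat u v) :
      ip (x + (1 / 2 : ℝ) • u + p₀) (x + (1 / 2 : ℝ) • u + p₀) ≤
        ip (x + (1 / 2 : ℝ) • u + p) (x + (1 / 2 : ℝ) • u + p) := by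
    have := hS.ip_le_ip_add hz (sub_mem_lat hp hp₀lat)
    rwa [add_add_sub_cancel] at this
  have h₀ := hmin zero_mem_lat
  have h₁ := hmin (neg_mem_lat left_mem_lat)
  have h₂ := hmin right_mem_lat
  have h₃ := hmin (sub_mem_lat (neg_mem_lat left_mem_lat) right_mem_lat)
  have hv := hS.ip_self_middle
  rw [hS.ip_right_eq x]
  rcases hp₀ with h | h | h | h <;> rw [h] at h₀ h₁ h₂ h₃ ⊢ <;>
  · simp only [ip_add_left, ip_add_right, ip_smul_left, ip_smul_right, ip_neg_left, ip_neg_right,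
      ip_sub_left, ip_sub_right, ip_zero_left, ip_zero_right, ip_comm u x, ip_comm v x,
      ip_comm v u] at h₀ h₁ h₂ h₃ ⊢
    refine eq_add_kummerMin (by linarith) (by linarith) (by linarith) (by linarith) ?_
    first
    | exact Or.inl (by linarith)
    | exact Or.inr (Or.inl (by linarith))
    | exact Or.inr (Or.inr (Or.inl (by linarith)))
    | exact Or.inr (Or.inr (Or.inr (by linarith)))

lemma phiMap_eq_kummer {x : ℝ × ℝ} (hx : x ∈ voronoiCell u v w) :
    phiMap u v x = kummer (-ip v w) (-ip u w) (-ip u v) (ip x u, ip x v) := by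
  have hZ := hS.ip_right_eq x
  have h₀₀ : theta u v 0 0 x = 0 := by
    rw [theta_eq_latticeSqDist, hS.latticeSqDist_eq hx (by simpa using zero_mem_lat)]
    simp
  have h₁₀ : theta u v 1 0 x = ip u u / 4 + kummerMin (-ip v w) (ip x u) (ip x v) (ip x w) := by
    rw [theta_eq_latticeSqDist, zero_div, zero_smul, add_zero, hS.latticeSqDist_add_half hx]
    ring
  -- `θ[0,1]` and `θ[1,1]` are `θ[1,0]` for the superbases `(v, u, w)` and `(w, v, u)`.
  have h₀₁ : theta u v 0 1 x = ip v v / 4 + kummerMin (-ip u w) (ip x v) (ip x u) (ip x w) := by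
    rw [theta_eq_latticeSqDist, zero_div, zero_smul, add_zero, ← latticeSqDist_comm,
      hS.swap_uv.latticeSqDist_add_half (by rwa [voronoiCell_swap_uv])]
    ring
  have h₁₁ : theta u v 1 1 x = ip w w / 4 + kummerMin (-ip u v) (ip x w) (ip x v) (ip x u) := by
    have hshift : x + (1 / 2 : ℝ) • u + (1 / 2 : ℝ) • v = x + (1 / 2 : ℝ) • w + -w := by
      rw [hS.eq_neg_sub]; module
    rw [theta_eq_latticeSqDist, hshift, latticeSqDist_add (neg_mem_lat hS.third_mem_lat),
      ← hS.latticeSqDist_swap_uw, hS.swap_uw.latticeSqDist_add_half (by rwa [voronoiCell_swap_uw]),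
      ip_comm v u]
    ring
  have hu := hS.ip_self_left
  have hv := hS.ip_self_middle
  have hw := hS.ip_self_right
  simp only [phiMap, kummer, h₀₀, h₁₀, h₀₁, h₁₁, hZ, sub_zero]
  refine Prod.ext ?_ (Prod.ext ?_ ?_) <;> dsimp only <;> congr 1 <;> linarith

lemma det_ne_zero : u.1 * v.2 - u.2 * v.1 ≠ 0 := by
  intro h
  have lagrange : ip u u * ip v v - ip u v ^ 2 = (u.1 * v.2 - u.2 * v.1) ^ 2 := by
    simp only [ip]; ring
  rw [h, hS.ip_self_left, hS.ip_self_middle] at lagrange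
  nlinarith [mul_pos_of_neg_of_neg hS.ip_uv_neg hS.ip_uw_neg,
    mul_pos_of_neg_of_neg hS.ip_uv_neg hS.ip_vw_neg,
    mul_pos_of_neg_of_neg hS.ip_uw_neg hS.ip_vw_neg]

theorem range_phiMap : range (phiMap u v) =
    kummer (-ip v w) (-ip u w) (-ip u v) '' hexagon (-ip v w) (-ip u w) (-ip u v) := by
  ext T
  constructor
  · rintro ⟨x, rfl⟩
    obtain ⟨p, hp, hxp⟩ := hS.exists_add_mem_voronoiCell x
    exact ⟨_, hS.mem_voronoiCell_iff.1 hxp, by rw [← hS.phiMap_eq_kummer hxp, phiMap_add hp]⟩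
  · rintro ⟨q, hq, rfl⟩
    obtain ⟨x, hxu, hxv⟩ := exists_ip_eq hS.det_ne_zero q.1 q.2
    have hx : x ∈ voronoiCell u v w := hS.mem_voronoiCell_iff.2 (by rwa [hxu, hxv])
    exact ⟨x, by rw [hS.phiMap_eq_kummer hx, hxu, hxv]⟩

end IsObtuseSuperbasis

def parallelepipedCoords : (ℝ × ℝ × ℝ) ≃ₗ[ℝ] ℝ × ℝ × ℝ where
  toFun T := (T.1 + T.2.1 - T.2.2, T.1 - T.2.1 + T.2.2, T.1 - T.2.1 - T.2.2)
  invFun s := ((s.1 + s.2.1) / 2, (s.1 - s.2.2) / 2, (s.2.1 - s.2.2) / 2)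
  map_add' _ _ := by ext <;> simp only [Prod.fst_add, Prod.snd_add] <;> ring
  map_smul' _ _ := by
    ext <;> simp only [Prod.smul_fst, Prod.smul_snd, smul_eq_mul, RingHom.id_apply] <;> ring
  left_inv _ := by ext <;> simp only <;> ring
  right_inv _ := by ext <;> simp only <;> ring

lemma parallelepipedCoords_apply (T : ℝ × ℝ × ℝ) :
    parallelepipedCoords T = (T.1 + T.2.1 - T.2.2, T.1 - T.2.1 + T.2.2, T.1 - T.2.1 - T.2.2) :=
  rfl

def box (A B C : ℝ) : Set (ℝ × ℝ × ℝ) := Icc (-A) A ×ˢ Icc (-B) B ×ˢ Icc (-C) C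

def parallelepiped (A B C : ℝ) : Set (ℝ × ℝ × ℝ) := parallelepipedCoords ⁻¹' box A B C

lemma parallelepiped_eq_image (A B C : ℝ) :
    parallelepiped A B C = parallelepipedCoords.symm '' box A B C :=
  (LinearEquiv.image_symm_eq_preimage _ _).symm

lemma mem_parallelepiped_iff {A B C : ℝ} {T : ℝ × ℝ × ℝ} :
    T ∈ parallelepiped A B C ↔ |T.1 + T.2.1 - T.2.2| ≤ A ∧ |T.1 - T.2.1 + T.2.2| ≤ B ∧
      |T.1 - T.2.1 - T.2.2| ≤ C := by
  simp only [parallelepiped, box, mem_preimage, parallelepipedCoords_apply, mem_prod, mem_Icc,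
    abs_le]

lemma extremePoints_parallelepiped {A B C : ℝ} (hA : 0 ≤ A) (hB : 0 ≤ B) (hC : 0 ≤ C) :
    extremePoints ℝ (parallelepiped A B C) =
      parallelepipedCoords.symm '' ({-A, A} ×ˢ {-B, B} ×ˢ {-C, C}) := by
  rw [parallelepiped_eq_image, ← image_extremePoints, box, extremePoints_prod, extremePoints_prod,
    extremePoints_Icc (by linarith), extremePoints_Icc (by linarith),
    extremePoints_Icc (by linarith)]

lemma convexHull_image_corners {A B C : ℝ} (hA : 0 ≤ A) (hB : 0 ≤ B) (hC : 0 ≤ C) :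
    convexHull ℝ (parallelepipedCoords.symm '' ({-A, A} ×ˢ {-B, B} ×ˢ {-C, C})) =
      parallelepiped A B C := by
  rw [parallelepiped_eq_image, ← LinearEquiv.coe_toLinearMap, ← LinearMap.image_convexHull,
    convexHull_prod, convexHull_prod, convexHull_pair, convexHull_pair, convexHull_pair,
    segment_eq_Icc (by linarith), segment_eq_Icc (by linarith), segment_eq_Icc (by linarith), box]

lemma frontier_box (A B C : ℝ) :
    frontier (box A B C) = {s | s ∈ box A B C ∧
      (s.1 = -A ∨ s.1 = A ∨ s.2.1 = -B ∨ s.2.1 = B ∨ s.2.2 = -C ∨ s.2.2 = C)} := by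
  have hclosed : IsClosed (box A B C) := isClosed_Icc.prod (isClosed_Icc.prod isClosed_Icc)
  rw [hclosed.frontier_eq, box, interior_prod_eq, interior_prod_eq, interior_Icc, interior_Icc,
    interior_Icc]
  ext s
  simp only [Set.mem_sdiff, mem_prod, mem_Icc, mem_Ioo, mem_ofPred_eq]
  constructor
  · rintro ⟨h, hns⟩
    refine ⟨h, ?_⟩
    by_contra! hne
    exact hns ⟨⟨lt_of_le_of_ne h.1.1 hne.1.symm, lt_of_le_of_ne h.1.2 hne.2.1⟩,
      ⟨lt_of_le_of_ne h.2.1.1 hne.2.2.1.symm, lt_of_le_of_ne h.2.1.2 hne.2.2.2.1⟩,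
      ⟨lt_of_le_of_ne h.2.2.1 hne.2.2.2.2.1.symm, lt_of_le_of_ne h.2.2.2 hne.2.2.2.2.2⟩⟩
  · rintro ⟨h, hs⟩
    refine ⟨h, fun ⟨⟨h₁, h₂⟩, ⟨h₃, h₄⟩, ⟨h₅, h₆⟩⟩ => ?_⟩
    rcases hs with hs | hs | hs | hs | hs | hs <;> linarith

lemma frontier_parallelepiped (A B C : ℝ) :
    frontier (parallelepiped A B C) = parallelepipedCoords ⁻¹' frontier (box A B C) :=
  (parallelepipedCoords.toContinuousLinearEquiv.toHomeomorph.preimage_frontier _).symm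

lemma parallelepipedCoords_symm_image_corners (t₁ t₂ t₃ : ℝ) :
    parallelepipedCoords.symm '' ({-(t₁ + t₂ - t₃), t₁ + t₂ - t₃} ×ˢ
      {-(t₁ - t₂ + t₃), t₁ - t₂ + t₃} ×ˢ {-(-t₁ + t₂ + t₃), -t₁ + t₂ + t₃}) =
      {(t₁, t₂, t₃), (-t₁, t₃ - t₁, t₂ - t₁), (t₃ - t₂, -t₂, t₁ - t₂), (t₂ - t₃, t₁ - t₃, -t₃),
        -(t₁, t₂, t₃), -(-t₁, t₃ - t₁, t₂ - t₁), -(t₃ - t₂, -t₂, t₁ - t₂),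
        -(t₂ - t₃, t₁ - t₃, -t₃)} := by
  ext T
  rw [LinearEquiv.image_symm_eq_preimage]
  simp only [mem_preimage, mem_prod, mem_insert_iff, mem_singleton_iff,
    parallelepipedCoords_apply, Prod.ext_iff, Prod.fst_neg, Prod.snd_neg]
  constructor
  · rintro ⟨h₁ | h₁, h₂ | h₂, h₃ | h₃⟩ <;>
    first
    | exact Or.inl ⟨by linarith, by linarith, by linarith⟩
    | exact Or.inr <| Or.inl ⟨by linarith, by linarith, by linarith⟩
    | exact Or.inr <| Or.inr <| Or.inl ⟨by linarith, by linarith, by linarith⟩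
    | exact Or.inr <| Or.inr <| Or.inr <| Or.inl ⟨by linarith, by linarith, by linarith⟩
    | exact Or.inr <| Or.inr <| Or.inr <| Or.inr <| Or.inl ⟨by linarith, by linarith, by linarith⟩
    | exact Or.inr <| Or.inr <| Or.inr <| Or.inr <| Or.inr <| Or.inl
        ⟨by linarith, by linarith, by linarith⟩
    | exact Or.inr <| Or.inr <| Or.inr <| Or.inr <| Or.inr <| Or.inr <| Or.inl
        ⟨by linarith, by linarith, by linarith⟩
    | exact Or.inr <| Or.inr <| Or.inr <| Or.inr <| Or.inr <| Or.inr <| Or.inr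
        ⟨by linarith, by linarith, by linarith⟩
  · rintro (⟨h₁, h₂, h₃⟩ | ⟨h₁, h₂, h₃⟩ | ⟨h₁, h₂, h₃⟩ | ⟨h₁, h₂, h₃⟩ | ⟨h₁, h₂, h₃⟩ |
      ⟨h₁, h₂, h₃⟩ | ⟨h₁, h₂, h₃⟩ | ⟨h₁, h₂, h₃⟩) <;>
    refine ⟨?_, ?_, ?_⟩ <;>
    first
    | exact Or.inl (by linarith)
    | exact Or.inr (by linarith)

section KummerMin

variable {a X Y Z : ℝ}

lemma kummerMin_of_nonneg (hX : 0 ≤ X) (h₁ : Y - Z ≤ a + X) (h₂ : Z - Y ≤ a + X) :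
    kummerMin a X Y Z = -X := by
  rw [kummerMin, abs_of_nonneg hX, min_eq_left]
  linarith [abs_le.2 (⟨by linarith, h₁⟩ : -(a + X) ≤ Y - Z ∧ Y - Z ≤ a + X)]

lemma kummerMin_of_nonpos (hX : X ≤ 0) (h₁ : Y - Z ≤ a - X) (h₂ : Z - Y ≤ a - X) :
    kummerMin a X Y Z = X := by
  rw [kummerMin, abs_of_nonpos hX, neg_neg, min_eq_left]
  linarith [abs_le.2 (⟨by linarith, h₁⟩ : -(a - X) ≤ Y - Z ∧ Y - Z ≤ a - X)]

lemma kummerMin_of_le_sub (ha : 0 ≤ a) (h₁ : a + X ≤ Y - Z) (h₂ : a - X ≤ Y - Z) :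
    kummerMin a X Y Z = a - (Y - Z) := by
  rw [kummerMin, abs_of_nonneg (a := Y - Z) (by linarith), min_eq_right]
  rcases abs_cases X with ⟨h, -⟩ | ⟨h, -⟩ <;> linarith

lemma kummerMin_of_le_sub' (ha : 0 ≤ a) (h₁ : a + X ≤ Z - Y) (h₂ : a - X ≤ Z - Y) :
    kummerMin a X Y Z = a - (Z - Y) := by
  simpa only [kummerMin, abs_sub_comm] using kummerMin_of_le_sub (Y := Z) (Z := Y) ha h₁ h₂

end KummerMin

lemma kummer_neg (a₁ a₂ a₃ : ℝ) (q : ℝ × ℝ) : kummer a₁ a₂ a₃ (-q) = kummer a₁ a₂ a₃ q := by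
  have h (a X Y Z : ℝ) : kummerMin a (-X) (-Y) (-Z) = kummerMin a X Y Z := by
    rw [kummerMin, kummerMin, abs_neg, ← neg_sub', abs_neg]
  have hZ : -(-q.1) - -q.2 = -(-q.1 - q.2) := by ring
  simp only [kummer, Prod.fst_neg, Prod.snd_neg, hZ, h]

/-! On each piece of the hexagon below `kummer` is affine; a lemma's name records which
coordinate of `parallelepipedCoords ∘ kummer` is constant there, and with which sign. -/

section Faces

variable {a₁ a₂ a₃ X Y : ℝ}

lemma parallelepipedCoords_kummer_fst_eq (h₃ : 0 ≤ a₃) (hX : 0 ≤ X) (hX' : 2 * X ≤ a₂)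
    (hY : 0 ≤ Y) (hY' : 2 * Y ≤ a₁) :
    parallelepipedCoords (kummer a₁ a₂ a₃ (X, Y)) = (a₃ / 2, a₂ / 2 - 2 * X, 2 * Y - a₁ / 2) := by
  rw [kummer]; dsimp only
  rw [kummerMin_of_nonneg hX (by linarith) (by linarith),
    kummerMin_of_nonneg hY (by linarith) (by linarith),
    kummerMin_of_nonpos (by linarith) (by linarith) (by linarith), parallelepipedCoords_apply]
  ext <;> dsimp only <;> ring

lemma parallelepipedCoords_kummer_snd_eq (h₂ : 0 ≤ a₂) (hX : 0 ≤ X) (hX' : 2 * X ≤ a₃)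
    (hZ : 0 ≤ -X - Y) (hZ' : 2 * (-X - Y) ≤ a₁) :
    parallelepipedCoords (kummer a₁ a₂ a₃ (X, Y)) =
      (a₃ / 2 - 2 * X, a₂ / 2, -2 * (X + Y) - a₁ / 2) := by
  rw [kummer]; dsimp only
  rw [kummerMin_of_nonneg hX (by linarith) (by linarith),
    kummerMin_of_nonpos (by linarith) (by linarith) (by linarith),
    kummerMin_of_nonneg hZ (by linarith) (by linarith), parallelepipedCoords_apply]
  ext <;> dsimp only <;> ring

lemma parallelepipedCoords_kummer_third_eq_neg (h₁ : 0 ≤ a₁) (hY : 0 ≤ Y) (hY' : 2 * Y ≤ a₃)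
    (hZ : 0 ≤ -X - Y) (hZ' : 2 * (-X - Y) ≤ a₂) :
    parallelepipedCoords (kummer a₁ a₂ a₃ (X, Y)) =
      (a₃ / 2 - 2 * Y, a₂ / 2 + 2 * (X + Y), -(a₁ / 2)) := by
  rw [kummer]; dsimp only
  rw [kummerMin_of_nonpos (by linarith) (by linarith) (by linarith),
    kummerMin_of_nonneg hY (by linarith) (by linarith),
    kummerMin_of_nonneg hZ (by linarith) (by linarith), parallelepipedCoords_apply]
  ext <;> dsimp only <;> ring

lemma parallelepipedCoords_kummer_fst_eq_neg (h₃ : 0 ≤ a₃) (hq : (X, Y) ∈ hexagon a₁ a₂ a₃)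
    (hX : a₃ ≤ 2 * X) (hY : 2 * Y ≤ -a₃) :
    parallelepipedCoords (kummer a₁ a₂ a₃ (X, Y)) =
      (-(a₃ / 2), a₂ / 2 + a₃ - 2 * X, -(a₁ / 2) - a₃ - 2 * Y) := by
  obtain ⟨hq₁, hq₁', hq₂, hq₂', hq₃, hq₃'⟩ := mem_hexagon_iff.1 hq
  rw [kummer]; dsimp only at *
  rw [kummerMin_of_nonneg (by linarith) (by linarith) (by linarith),
    kummerMin_of_nonpos (by linarith) (by linarith) (by linarith),
    kummerMin_of_le_sub' h₃ (by linarith) (by linarith), parallelepipedCoords_apply]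
  ext <;> dsimp only <;> ring

lemma parallelepipedCoords_kummer_snd_eq_neg (h₂ : 0 ≤ a₂) (hq : (X, Y) ∈ hexagon a₁ a₂ a₃)
    (hX : a₂ ≤ 2 * X) (hZ : 2 * (-X - Y) ≤ -a₂) :
    parallelepipedCoords (kummer a₁ a₂ a₃ (X, Y)) =
      (a₃ / 2 + a₂ - 2 * X, -(a₂ / 2), 2 * (X + Y) - a₁ / 2 - a₂) := by
  obtain ⟨hq₁, hq₁', hq₂, hq₂', hq₃, hq₃'⟩ := mem_hexagon_iff.1 hq
  rw [kummer]; dsimp only at *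
  rw [kummerMin_of_nonneg (by linarith) (by linarith) (by linarith),
    kummerMin_of_le_sub h₂ (by linarith) (by linarith),
    kummerMin_of_nonpos (by linarith) (by linarith) (by linarith), parallelepipedCoords_apply]
  ext <;> dsimp only <;> ring

lemma parallelepipedCoords_kummer_third_eq (h₁ : 0 ≤ a₁) (hq : (X, Y) ∈ hexagon a₁ a₂ a₃)
    (hY : a₁ ≤ 2 * Y) (hZ : 2 * (-X - Y) ≤ -a₁) :
    parallelepipedCoords (kummer a₁ a₂ a₃ (X, Y)) =
      (a₃ / 2 + a₁ - 2 * Y, a₂ / 2 + a₁ - 2 * (X + Y), a₁ / 2) := by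
  obtain ⟨hq₁, hq₁', hq₂, hq₂', hq₃, hq₃'⟩ := mem_hexagon_iff.1 hq
  rw [kummer]; dsimp only at *
  rw [kummerMin_of_le_sub h₁ (by linarith) (by linarith),
    kummerMin_of_nonneg (by linarith) (by linarith) (by linarith),
    kummerMin_of_nonpos (by linarith) (by linarith) (by linarith), parallelepipedCoords_apply]
  ext <;> dsimp only <;> ring

end Faces

section KummerImage

variable {a₁ a₂ a₃ : ℝ}

lemma two_nonneg_or_neg_two_nonneg (q : ℝ × ℝ) :
    ((0 ≤ q.1 ∧ 0 ≤ q.2) ∨ (0 ≤ q.1 ∧ 0 ≤ -q.1 - q.2) ∨ (0 ≤ q.2 ∧ 0 ≤ -q.1 - q.2)) ∨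
      ((0 ≤ -q.1 ∧ 0 ≤ -q.2) ∨ (0 ≤ -q.1 ∧ 0 ≤ q.1 + q.2) ∨ (0 ≤ -q.2 ∧ 0 ≤ q.1 + q.2)) := by
  rcases le_total 0 q.1 with hX | hX <;> rcases le_total 0 q.2 with hY | hY <;>
    rcases le_total 0 (q.1 + q.2) with hZ | hZ
  all_goals first
    | exact Or.inl (Or.inl ⟨by linarith, by linarith⟩)
    | exact Or.inl (Or.inr (Or.inl ⟨by linarith, by linarith⟩))
    | exact Or.inl (Or.inr (Or.inr ⟨by linarith, by linarith⟩))
    | exact Or.inr (Or.inl ⟨by linarith, by linarith⟩)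
    | exact Or.inr (Or.inr (Or.inl ⟨by linarith, by linarith⟩))
    | exact Or.inr (Or.inr (Or.inr ⟨by linarith, by linarith⟩))

lemma parallelepipedCoords_kummer_mem_frontier_box (h₁ : 0 < a₁) (h₂ : 0 < a₂) (h₃ : 0 < a₃)
    {q : ℝ × ℝ} (hq : q ∈ hexagon a₁ a₂ a₃) :
    parallelepipedCoords (kummer a₁ a₂ a₃ q) ∈ {s | s ∈ box (a₃ / 2) (a₂ / 2) (a₁ / 2) ∧
      (s.1 = -(a₃ / 2) ∨ s.1 = a₃ / 2 ∨ s.2.1 = -(a₂ / 2) ∨ s.2.1 = a₂ / 2 ∨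
        s.2.2 = -(a₁ / 2) ∨ s.2.2 = a₁ / 2)} := by
  wlog hsign : (0 ≤ q.1 ∧ 0 ≤ q.2) ∨ (0 ≤ q.1 ∧ 0 ≤ -q.1 - q.2) ∨ (0 ≤ q.2 ∧ 0 ≤ -q.1 - q.2)
    generalizing q
  · rw [← kummer_neg]
    refine this (neg_mem_hexagon hq) ?_
    simpa only [Prod.fst_neg, Prod.snd_neg, neg_neg, sub_neg_eq_add, neg_add_eq_sub] using
      (two_nonneg_or_neg_two_nonneg q).resolve_left hsign
  obtain ⟨X, Y⟩ := q
  obtain ⟨hq₁, hq₁', hq₂, hq₂', hq₃, hq₃'⟩ := mem_hexagon_iff.1 hq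
  have hq_neg : (-X, -Y) ∈ hexagon a₁ a₂ a₃ := neg_mem_hexagon hq
  dsimp only at hsign hq₁ hq₁' hq₂ hq₂' hq₃ hq₃'
  rcases hsign with ⟨hX, hY⟩ | ⟨hX, hZ⟩ | ⟨hY, hZ⟩
  · by_cases hX' : 2 * X ≤ a₂
    · by_cases hY' : 2 * Y ≤ a₁
      · rw [parallelepipedCoords_kummer_fst_eq h₃.le hX hX' hY hY']
        refine ⟨⟨⟨?_, ?_⟩, ⟨?_, ?_⟩, ?_, ?_⟩, by simp⟩ <;> dsimp only <;> linarith
      · rw [parallelepipedCoords_kummer_third_eq h₁.le hq (by linarith) (by linarith)]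
        refine ⟨⟨⟨?_, ?_⟩, ⟨?_, ?_⟩, ?_, ?_⟩, by simp⟩ <;> dsimp only <;> linarith
    · rw [parallelepipedCoords_kummer_snd_eq_neg h₂.le hq (by linarith) (by linarith)]
      refine ⟨⟨⟨?_, ?_⟩, ⟨?_, ?_⟩, ?_, ?_⟩, by simp⟩ <;> dsimp only <;> linarith
  · by_cases hX' : 2 * X ≤ a₃
    · by_cases hZ' : 2 * (-X - Y) ≤ a₁
      · rw [parallelepipedCoords_kummer_snd_eq h₂.le hX hX' hZ hZ']
        refine ⟨⟨⟨?_, ?_⟩, ⟨?_, ?_⟩, ?_, ?_⟩, by simp⟩ <;> dsimp only <;> linarith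
      · rw [← kummer_neg, Prod.neg_mk,
          parallelepipedCoords_kummer_third_eq h₁.le hq_neg (by linarith) (by linarith)]
        refine ⟨⟨⟨?_, ?_⟩, ⟨?_, ?_⟩, ?_, ?_⟩, by simp⟩ <;> dsimp only <;> linarith
    · rw [parallelepipedCoords_kummer_fst_eq_neg h₃.le hq (by linarith) (by linarith)]
      refine ⟨⟨⟨?_, ?_⟩, ⟨?_, ?_⟩, ?_, ?_⟩, by simp⟩ <;> dsimp only <;> linarith
  · by_cases hY' : 2 * Y ≤ a₃
    · by_cases hZ' : 2 * (-X - Y) ≤ a₂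
      · rw [parallelepipedCoords_kummer_third_eq_neg h₁.le hY hY' hZ hZ']
        refine ⟨⟨⟨?_, ?_⟩, ⟨?_, ?_⟩, ?_, ?_⟩, by simp⟩ <;> dsimp only <;> linarith
      · rw [← kummer_neg, Prod.neg_mk,
          parallelepipedCoords_kummer_snd_eq_neg h₂.le hq_neg (by linarith) (by linarith)]
        refine ⟨⟨⟨?_, ?_⟩, ⟨?_, ?_⟩, ?_, ?_⟩, by simp⟩ <;> dsimp only <;> linarith
    · rw [← kummer_neg, Prod.neg_mk,
        parallelepipedCoords_kummer_fst_eq_neg h₃.le hq_neg (by linarith) (by linarith)]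
      refine ⟨⟨⟨?_, ?_⟩, ⟨?_, ?_⟩, ?_, ?_⟩, by simp⟩ <;> dsimp only <;> linarith

lemma exists_parallelepipedCoords_kummer_eq (h₁ : 0 < a₁) (h₂ : 0 < a₂) (h₃ : 0 < a₃)
    {s : ℝ × ℝ × ℝ} (hs : s ∈ box (a₃ / 2) (a₂ / 2) (a₁ / 2))
    (hface : s.1 = -(a₃ / 2) ∨ s.1 = a₃ / 2 ∨ s.2.1 = -(a₂ / 2) ∨ s.2.1 = a₂ / 2 ∨
      s.2.2 = -(a₁ / 2) ∨ s.2.2 = a₁ / 2) :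
    ∃ q ∈ hexagon a₁ a₂ a₃, parallelepipedCoords (kummer a₁ a₂ a₃ q) = s := by
  obtain ⟨s₁, s₂, s₃⟩ := s
  obtain ⟨⟨hs₁, hs₁'⟩, ⟨hs₂, hs₂'⟩, hs₃, hs₃'⟩ := hs
  dsimp only at hs₁ hs₁' hs₂ hs₂' hs₃ hs₃' hface
  rcases hface with rfl | rfl | rfl | rfl | rfl | rfl
  · have hq : ((a₂ / 2 + a₃ - s₂) / 2, (-(a₁ / 2) - a₃ - s₃) / 2) ∈ hexagon a₁ a₂ a₃ :=
      mem_hexagon_iff.2 (by refine ⟨?_, ?_, ?_, ?_, ?_, ?_⟩ <;> dsimp only <;> linarith)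
    refine ⟨_, hq, ?_⟩
    rw [parallelepipedCoords_kummer_fst_eq_neg h₃.le hq (by linarith) (by linarith)]
    ext <;> dsimp only <;> ring
  · refine ⟨((a₂ / 2 - s₂) / 2, (s₃ + a₁ / 2) / 2),
      mem_hexagon_iff.2 (by refine ⟨?_, ?_, ?_, ?_, ?_, ?_⟩ <;> dsimp only <;> linarith), ?_⟩
    rw [parallelepipedCoords_kummer_fst_eq h₃.le (by linarith) (by linarith) (by linarith)
      (by linarith)]
    ext <;> dsimp only <;> ring
  · have hq : ((a₃ / 2 + a₂ - s₁) / 2, (s₃ + a₁ / 2 + a₂) / 2 - (a₃ / 2 + a₂ - s₁) / 2) ∈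
        hexagon a₁ a₂ a₃ :=
      mem_hexagon_iff.2 (by refine ⟨?_, ?_, ?_, ?_, ?_, ?_⟩ <;> dsimp only <;> linarith)
    refine ⟨_, hq, ?_⟩
    rw [parallelepipedCoords_kummer_snd_eq_neg h₂.le hq (by linarith) (by linarith)]
    ext <;> dsimp only <;> ring
  · refine ⟨((a₃ / 2 - s₁) / 2, -(s₃ + a₁ / 2) / 2 - (a₃ / 2 - s₁) / 2),
      mem_hexagon_iff.2 (by refine ⟨?_, ?_, ?_, ?_, ?_, ?_⟩ <;> dsimp only <;> linarith), ?_⟩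
    rw [parallelepipedCoords_kummer_snd_eq h₂.le (by linarith) (by linarith) (by linarith)
      (by linarith)]
    ext <;> dsimp only <;> ring
  · refine ⟨((s₂ - a₂ / 2) / 2 - (a₃ / 2 - s₁) / 2, (a₃ / 2 - s₁) / 2),
      mem_hexagon_iff.2 (by refine ⟨?_, ?_, ?_, ?_, ?_, ?_⟩ <;> dsimp only <;> linarith), ?_⟩
    rw [parallelepipedCoords_kummer_third_eq_neg h₁.le (by linarith) (by linarith) (by linarith)
      (by linarith)]
    ext <;> dsimp only <;> ring
  · have hq : ((a₂ / 2 + a₁ - s₂) / 2 - (a₃ / 2 + a₁ - s₁) / 2, (a₃ / 2 + a₁ - s₁) / 2) ∈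
        hexagon a₁ a₂ a₃ :=
      mem_hexagon_iff.2 (by refine ⟨?_, ?_, ?_, ?_, ?_, ?_⟩ <;> dsimp only <;> linarith)
    refine ⟨_, hq, ?_⟩
    rw [parallelepipedCoords_kummer_third_eq h₁.le hq (by linarith) (by linarith)]
    ext <;> dsimp only <;> ring

theorem image_kummer_hexagon (h₁ : 0 < a₁) (h₂ : 0 < a₂) (h₃ : 0 < a₃) :
    kummer a₁ a₂ a₃ '' hexagon a₁ a₂ a₃ =
      frontier (parallelepiped (a₃ / 2) (a₂ / 2) (a₁ / 2)) := by
  rw [frontier_parallelepiped, frontier_box]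
  ext T
  constructor
  · rintro ⟨q, hq, rfl⟩
    exact parallelepipedCoords_kummer_mem_frontier_box h₁ h₂ h₃ hq
  · rintro ⟨hbox, hface⟩
    obtain ⟨q, hq, hqT⟩ := exists_parallelepipedCoords_kummer_eq h₁ h₂ h₃ hbox hface
    exact ⟨q, hq, parallelepipedCoords.injective hqT⟩

end KummerImage

end TropicalKummer

open TropicalKummer in
theorem tropical_kummer_quartic_is_parallelepiped_boundary
    (u v w : ℝ × ℝ) (hw : w = -u - v)
    (huv : ip u v < 0) (huw : ip u w < 0) (hvw : ip v w < 0)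
    (θ₁₀ θ₀₁ θ₁₁ : ℝ)
    (h10 : θ₁₀ = ip u u / 4) (h01 : θ₀₁ = ip v v / 4) (h11 : θ₁₁ = ip w w / 4)
    (τ₀ τ₁ τ₂ τ₃ : ℝ × ℝ × ℝ)
    (hτ₀ : τ₀ = (θ₁₀, θ₀₁, θ₁₁))
    (hτ₁ : τ₁ = (-θ₁₀, θ₁₁ - θ₁₀, θ₀₁ - θ₁₀))
    (hτ₂ : τ₂ = (θ₁₁ - θ₀₁, -θ₀₁, θ₁₀ - θ₀₁))
    (hτ₃ : τ₃ = (θ₀₁ - θ₁₁, θ₁₀ - θ₁₁, -θ₁₁))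
    (Ppar : Set (ℝ × ℝ × ℝ))
    (hPpar : Ppar = {T : ℝ × ℝ × ℝ |
        |T.1 + T.2.1 - T.2.2| ≤ θ₁₀ + θ₀₁ - θ₁₁ ∧
        |T.1 - T.2.1 + T.2.2| ≤ θ₁₀ - θ₀₁ + θ₁₁ ∧
        |T.1 - T.2.1 - T.2.2| ≤ -θ₁₀ + θ₀₁ + θ₁₁}) :
    (Ppar = convexHull ℝ ({τ₀, τ₁, τ₂, τ₃, -τ₀, -τ₁, -τ₂, -τ₃} : Set (ℝ × ℝ × ℝ)) ∧
      Set.extremePoints ℝ Ppar = ({τ₀, τ₁, τ₂, τ₃, -τ₀, -τ₁, -τ₂, -τ₃} : Set (ℝ × ℝ × ℝ))) ∧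
    Set.range (phiMap u v) = frontier Ppar := by
  have hS : IsObtuseSuperbasis u v w := ⟨by rw [hw]; abel, huv, huw, hvw⟩
  have := hS.ip_self_left
  have := hS.ip_self_middle
  have := hS.ip_self_right
  have hA : θ₁₀ + θ₀₁ - θ₁₁ = -ip u v / 2 := by linarith
  have hB : θ₁₀ - θ₀₁ + θ₁₁ = -ip u w / 2 := by linarith
  have hC : -θ₁₀ + θ₀₁ + θ₁₁ = -ip v w / 2 := by linarith
  have hP : Ppar = parallelepiped (θ₁₀ + θ₀₁ - θ₁₁) (θ₁₀ - θ₀₁ + θ₁₁) (-θ₁₀ + θ₀₁ + θ₁₁) := by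
    rw [hPpar]; ext T; exact mem_parallelepiped_iff.symm
  have hτ := parallelepipedCoords_symm_image_corners θ₁₀ θ₀₁ θ₁₁
  rw [← hτ₀, ← hτ₁, ← hτ₂, ← hτ₃] at hτ
  have hA₀ : 0 ≤ θ₁₀ + θ₀₁ - θ₁₁ := by rw [hA]; linarith
  have hB₀ : 0 ≤ θ₁₀ - θ₀₁ + θ₁₁ := by rw [hB]; linarith
  have hC₀ : 0 ≤ -θ₁₀ + θ₀₁ + θ₁₁ := by rw [hC]; linarith
  refine ⟨⟨?_, ?_⟩, ?_⟩
  · rw [← hτ, convexHull_image_corners hA₀ hB₀ hC₀, hP]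
  · rw [← hτ, hP, extremePoints_parallelepiped hA₀ hB₀ hC₀]
  · rw [hP, hA, hB, hC, hS.range_phiMap, image_kummer_hexagon (neg_pos.2 hvw) (neg_pos.2 huw)
      (neg_pos.2 huv)]
end
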